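/- Let α, β ∈ ℕ and n ≥ 1. Define Q_n^{α,β}(x) = q_n^{α,β}(x+1)P_{n-1}^{α,β+2}(x) with q_n^{α,β} = (α+β+2)_n (β+2)_{n-1} / (2·n!·(α+1)_{n-1}). Then the differential operator L̃ of order 2β+4 defined by L̃y(x) = ((x+1)/(x-1)^α) D_x^{β+2}{(x-1)^{α+β+2} D_x^{β+2}[(x+1)^{β+1} y(x)]} satisfies L̃ Q_n^{α,β}(x) = (n)_{β+2}(n+α)_{β+2} Q_n^{α,β}(x). -/

import Mathlib

noncomputable def poch (a : ℝ) (k : ℕ) : ℝ := (ascPochhammer ℝ k).eval a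

noncomputable def jacobiP (n : ℕ) (a b x : ℝ) : ℝ :=
  (poch (a + 1) n / (Nat.factorial n : ℝ)) *
    ∑ k ∈ Finset.range (n + 1),
      (poch (-(n : ℝ)) k * poch ((n : ℝ) + a + b + 1) k) /
        (poch (a + 1) k * (Nat.factorial k : ℝ)) * ((1 - x) / 2) ^ k

/-! Both halves of `L̃` are iterated Rodrigues-type lowering steps for Jacobi polynomials,
`D[(x+1)^(m+1) P_n^{a,m+1}] = (n+m+1) (x+1)^m P_n^{a+1,m}` and
`D[(x-1)^(m+1) P_n^{m+1,b}] = (n+m+1) (x-1)^m P_n^{m,b+1}`,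
each a coefficientwise identity between the hypergeometric sums in `(1-x)/2`.
Applied `β+2` times, the first turns `(x+1)^(β+1) Q_n = q (x+1)^(β+2) P_{n-1}^{α,β+2}` into
`q (n)_{β+2} P_{n-1}^{α+β+2,0}`; the second then turns `(x-1)^(α+β+2) P_{n-1}^{α+β+2,0}` into
`(n+α)_{β+2} (x-1)^α P_{n-1}^{α,β+2}`, and multiplying by `(x+1)/(x-1)^α` gives back `Q_n`. -/

open Finset Nat

lemma sum_range_natCast_mul_pow_pred {R : Type*} [CommSemiring R] (c : ℕ → R) (n : ℕ) (u : R)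
    (hc : c (n + 1) = 0) :
    ∑ k ∈ range (n + 1), k * c k * u ^ (k - 1)
      = ∑ k ∈ range (n + 1), (k + 1) * c (k + 1) * u ^ k := by
  rw [sum_range_succ', sum_range_succ, hc]
  simp

lemma iter_deriv_const_mul_field {𝕜 : Type*} [NontriviallyNormedField 𝕜] (c : 𝕜)
    (f : 𝕜 → 𝕜) (j : ℕ) : deriv^[j] (fun s => c * f s) = fun s => c * deriv^[j] f s := by
  funext s
  simpa only [iteratedDeriv_eq_iterate] using iteratedDeriv_const_mul_field c f (x := s)

lemma hasDerivAt_half_one_sub_pow (k : ℕ) (x : ℝ) :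
    HasDerivAt (fun s : ℝ => ((1 - s) / 2) ^ k) (-(k / 2) * ((1 - x) / 2) ^ (k - 1)) x :=
  ((((hasDerivAt_const x (1 : ℝ)).fun_sub (hasDerivAt_id' x)).div_const 2).fun_pow k).congr_deriv
    (by ring)

lemma poch_zero (a : ℝ) : poch a 0 = 1 := by simp [poch]

lemma poch_succ (a : ℝ) (k : ℕ) : poch a (k + 1) = poch a k * (a + k) := by
  simp [poch, ascPochhammer_succ_eval]

lemma poch_succ_left (a : ℝ) (k : ℕ) : poch a (k + 1) = a * poch (a + 1) k := by
  simp [poch, ascPochhammer_succ_left, Polynomial.eval_comp]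

lemma poch_pos {a : ℝ} (ha : 0 < a) (k : ℕ) : 0 < poch a k := ascPochhammer_pos k a ha

lemma poch_mul_add (a : ℝ) (k : ℕ) : poch a k * (a + k) = a * poch (a + 1) k := by
  rw [← poch_succ, poch_succ_left]

lemma poch_neg_natCast_succ (n : ℕ) : poch (-n) (n + 1) = 0 :=
  ascPochhammer_eval_neg_coe_nat_of_lt n.lt_succ_self

noncomputable def jacobiCoeff (n : ℕ) (a b : ℝ) (k : ℕ) : ℝ :=
  poch (a + 1) n / n ! * (poch (-n) k * poch (n + a + b + 1) k / (poch (a + 1) k * k !))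

lemma jacobiP_eq_sum (n : ℕ) (a b x : ℝ) :
    jacobiP n a b x = ∑ k ∈ range (n + 1), jacobiCoeff n a b k * ((1 - x) / 2) ^ k := by
  simp only [jacobiP, jacobiCoeff, mul_sum, mul_assoc]

lemma jacobiCoeff_succ_self (n : ℕ) (a b : ℝ) : jacobiCoeff n a b (n + 1) = 0 := by
  simp [jacobiCoeff, poch_neg_natCast_succ]

lemma jacobiCoeff_add_one_left {a : ℝ} (ha : -1 < a) (n k : ℕ) (b : ℝ) :
    jacobiCoeff n (a + 1) b k * (a + 1 + k) = (n + a + 1) * jacobiCoeff n a (b + 1) k := by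
  have h1 : poch (a + 1) k ≠ 0 := (poch_pos (by linarith) k).ne'
  have h2 : poch (a + 1 + 1) k ≠ 0 := (poch_pos (by linarith) k).ne'
  have hk := poch_mul_add (a + 1)
  simp only [jacobiCoeff]
  rw [show (n : ℝ) + (a + 1) + b + 1 = n + a + (b + 1) + 1 by ring]
  field_simp
  set c := poch (-n) k * poch (n + a + (b + 1) + 1) k
  linear_combination c * poch (a + 1 + 1) n * hk k - c * poch (a + 1 + 1) k * hk n

lemma jacobiCoeff_add_one_right {a : ℝ} (ha : -1 < a) (n k : ℕ) (b : ℝ) :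
    (b + 1 + k) * jacobiCoeff n a (b + 1) k - (k + 1) * jacobiCoeff n a (b + 1) (k + 1)
      = (n + b + 1) * jacobiCoeff n (a + 1) b k := by
  have h1 : poch (a + 1) k ≠ 0 := (poch_pos (by linarith) k).ne'
  have h2 : poch (a + 1 + 1) k ≠ 0 := (poch_pos (by linarith) k).ne'
  have h3 : a + 1 + k ≠ 0 := (add_pos_of_pos_of_nonneg (by linarith) k.cast_nonneg).ne'
  have hk := poch_mul_add (a + 1)
  simp only [jacobiCoeff, poch_succ _ k, factorial_succ, cast_mul, cast_succ]
  rw [show (n : ℝ) + (a + 1) + b + 1 = n + a + (b + 1) + 1 by ring]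
  field_simp
  set c := (n + b + 1) * poch (-n) k * poch (n + a + (b + 1) + 1) k
  linear_combination c * poch (a + 1 + 1) k * hk n - c * poch (a + 1 + 1) n * hk k

lemma hasDerivAt_sub_one_pow_mul_half_one_sub_pow (m k : ℕ) (x : ℝ) :
    HasDerivAt (fun s => (s - 1) ^ (m + 1) * ((1 - s) / 2) ^ k)
      ((m + 1 + k) * ((x - 1) ^ m * ((1 - x) / 2) ^ k)) x := by
  refine ((((hasDerivAt_id' x).sub_const 1).fun_pow (m + 1)).fun_mul
    (hasDerivAt_half_one_sub_pow k x)).congr_deriv ?_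
  rcases k with _ | k
  · simp
  · simp only [Nat.add_sub_cancel, cast_add, cast_one, pow_succ]
    ring

lemma hasDerivAt_add_one_pow_mul_half_one_sub_pow (m k : ℕ) (x : ℝ) :
    HasDerivAt (fun s => (s + 1) ^ (m + 1) * ((1 - s) / 2) ^ k)
      ((x + 1) ^ m * ((m + 1 + k) * ((1 - x) / 2) ^ k - k * ((1 - x) / 2) ^ (k - 1))) x := by
  refine ((((hasDerivAt_id' x).add_const 1).fun_pow (m + 1)).fun_mul
    (hasDerivAt_half_one_sub_pow k x)).congr_deriv ?_
  rcases k with _ | k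
  · simp [mul_comm]
  · simp only [Nat.add_sub_cancel, cast_add, cast_one, pow_succ]
    ring

theorem hasDerivAt_sub_one_pow_mul_jacobiP (n m : ℕ) (b x : ℝ) :
    HasDerivAt (fun s => (s - 1) ^ (m + 1) * jacobiP n (m + 1) b s)
      ((n + m + 1) * ((x - 1) ^ m * jacobiP n m (b + 1) x)) x := by
  simp only [jacobiP_eq_sum, mul_sum]
  have hsum := HasDerivAt.fun_sum (u := range (n + 1)) fun k _ =>
    (hasDerivAt_sub_one_pow_mul_half_one_sub_pow m k x).const_mul (jacobiCoeff n (m + 1) b k)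
  refine (hsum.congr_deriv ?_).congr_of_eventuallyEq
    (.of_forall fun s => sum_congr rfl fun k _ => by ring)
  refine sum_congr rfl fun k _ => ?_
  linear_combination ((x - 1) ^ m * ((1 - x) / 2) ^ k) *
    jacobiCoeff_add_one_left (neg_one_lt_zero.trans_le m.cast_nonneg) n k b

theorem hasDerivAt_add_one_pow_mul_jacobiP (n m : ℕ) {a : ℝ} (ha : -1 < a) (x : ℝ) :
    HasDerivAt (fun s => (s + 1) ^ (m + 1) * jacobiP n a (m + 1) s)
      ((n + m + 1) * ((x + 1) ^ m * jacobiP n (a + 1) m x)) x := by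
  simp only [jacobiP_eq_sum, mul_sum]
  have hsum := HasDerivAt.fun_sum (u := range (n + 1)) fun k _ =>
    (hasDerivAt_add_one_pow_mul_half_one_sub_pow m k x).const_mul (jacobiCoeff n a (m + 1) k)
  refine (hsum.congr_deriv ?_).congr_of_eventuallyEq
    (.of_forall fun s => sum_congr rfl fun k _ => by ring)
  set u := (1 - x) / 2
  set c := jacobiCoeff n a (m + 1)
  have hsplit :
      ∑ k ∈ range (n + 1), c k * ((x + 1) ^ m * ((m + 1 + k) * u ^ k - k * u ^ (k - 1)))
      = (x + 1) ^ m * (∑ k ∈ range (n + 1), (m + 1 + k) * c k * u ^ k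
        - ∑ k ∈ range (n + 1), k * c k * u ^ (k - 1)) := by
    rw [mul_sub, mul_sum, mul_sum, ← sum_sub_distrib]
    exact sum_congr rfl fun k _ => by ring
  rw [hsplit, sum_range_natCast_mul_pow_pred c n u (jacobiCoeff_succ_self n a _),
    ← sum_sub_distrib, mul_sum]
  refine sum_congr rfl fun k _ => ?_
  linear_combination ((x + 1) ^ m * u ^ k) * jacobiCoeff_add_one_right ha n k m

theorem iter_deriv_sub_one_pow_mul_jacobiP (n m j : ℕ) (b : ℝ) :
    deriv^[j] (fun s => (s - 1) ^ (m + j) * jacobiP n ↑(m + j) b s)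
      = fun x => poch (n + m + 1) j * ((x - 1) ^ m * jacobiP n m (b + j) x) := by
  induction j generalizing m with
  | zero => simp [poch_zero]
  | succ j ih =>
    rw [Function.iterate_succ_apply', show m + (j + 1) = m + 1 + j by omega, ih (m + 1)]
    funext x
    push_cast
    rw [((hasDerivAt_sub_one_pow_mul_jacobiP n m (b + j) x).const_mul _).deriv, poch_succ_left]
    ring_nf

theorem iter_deriv_add_one_pow_mul_jacobiP (n m j : ℕ) {a : ℝ} (ha : -1 < a) :
    deriv^[j] (fun s => (s + 1) ^ (m + j) * jacobiP n a ↑(m + j) s)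
      = fun x => poch (n + m + 1) j * ((x + 1) ^ m * jacobiP n (a + j) m x) := by
  induction j generalizing m with
  | zero => simp [poch_zero]
  | succ j ih =>
    rw [Function.iterate_succ_apply', show m + (j + 1) = m + 1 + j by omega, ih (m + 1)]
    funext x
    push_cast
    have ha' : -1 < a + j := lt_add_of_lt_of_nonneg ha j.cast_nonneg
    rw [((hasDerivAt_add_one_pow_mul_jacobiP n m ha' x).const_mul _).deriv, poch_succ_left]
    ring_nf

/-- the operator `L̃` of order `2β+4` has `Q_n^{α,β}` as eigenfunction with
eigenvalue `(n)_{β+2}(n+α)_{β+2}`. -/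
theorem Q_eigen (α β n : ℕ) (hn : 1 ≤ n) :
    let q : ℝ := poch ((α : ℝ) + (β : ℝ) + 2) n * poch ((β : ℝ) + 2) (n - 1) /
      (2 * (Nat.factorial n : ℝ) * poch ((α : ℝ) + 1) (n - 1))
    let Q : ℝ → ℝ := fun x => q * (x + 1) * jacobiP (n - 1) (α : ℝ) ((β : ℝ) + 2) x
    ∀ x ∈ Set.Ioo (-1 : ℝ) 1,
      ((x + 1) / (x - 1) ^ α) *
        deriv^[β + 2] (fun t => (t - 1) ^ (α + β + 2) *
          deriv^[β + 2] (fun s => (s + 1) ^ (β + 1) * Q s) t) x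
      = poch (n : ℝ) (β + 2) * poch ((n : ℝ) + (α : ℝ)) (β + 2) * Q x := by
  intro q Q x hx
  obtain ⟨n, rfl⟩ := Nat.exists_eq_add_of_le' hn
  have hα : (-1 : ℝ) < α := neg_one_lt_zero.trans_le α.cast_nonneg
  have hinner : (fun s => (s + 1) ^ (β + 1) * Q s)
      = fun s => q * ((s + 1) ^ (0 + (β + 2)) * jacobiP n α ↑(0 + (β + 2)) s) := by
    funext s
    simp only [Q, Nat.add_sub_cancel, zero_add]
    push_cast
    ring
  have houter : (fun t => (t - 1) ^ (α + β + 2) *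
      deriv^[β + 2] (fun s => (s + 1) ^ (β + 1) * Q s) t)
      = fun t => q * poch (n + 1) (β + 2) *
          ((t - 1) ^ (α + (β + 2)) * jacobiP n ↑(α + (β + 2)) 0 t) := by
    rw [hinner, iter_deriv_const_mul_field, iter_deriv_add_one_pow_mul_jacobiP n 0 (β + 2) hα]
    funext t
    push_cast
    ring_nf
  rw [houter, iter_deriv_const_mul_field, iter_deriv_sub_one_pow_mul_jacobiP n α (β + 2)]
  have hx1 : (x - 1) ^ α ≠ 0 := pow_ne_zero _ (by linarith [hx.2])
  simp only [Q, Nat.add_sub_cancel]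
  field_simp
  push_cast
  ring_nf
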